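/- For α ∈ (0,1), m, k ∈ ℕ₀ with 0 ≤ k < 2^m, the left-sided Riemann–Liouville fractional derivative of order α of the Faber–Schauder function e_{m,k} at t ∈ (0,1) equals (2^{m(α−1/2)}/Γ(2−α)) · ( (2^m t − k)₊^{1−α} − 2(2^m t − k − 0.5)₊^{1−α} + (2^m t − k − 1)₊^{1−α} ). -/

import Mathlib

open MeasureTheory Set

/-- The Haar function `H_{m,k}`. -/
noncomputable def Haar (m k : ℕ) (s : ℝ) : ℝ :=
  if s ∈ Set.Ioc ((k : ℝ) / 2 ^ m) (((k : ℝ) + 0.5) / 2 ^ m) then (2 : ℝ) ^ ((m : ℝ) / 2)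
  else if s ∈ Set.Ioc (((k : ℝ) + 0.5) / 2 ^ m) (((k : ℝ) + 1) / 2 ^ m) then
    -(2 : ℝ) ^ ((m : ℝ) / 2)
  else 0

/-- The Faber–Schauder function `e_{m,k}`, as the primitive of the Haar function. -/
noncomputable def FS (m k : ℕ) (t : ℝ) : ℝ := ∫ s in (0 : ℝ)..t, Haar m k s

/-- The left-sided Riemann–Liouville fractional derivative of order `α`. -/
noncomputable def Dleft (α : ℝ) (f : ℝ → ℝ) (t : ℝ) : ℝ :=
  (Real.Gamma (1 - α))⁻¹ *
    deriv (fun s : ℝ => ∫ u in (0 : ℝ)..s, (s - u) ^ (-α) * f u) t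

/-!
The Faber–Schauder function is a hat function: a combination
`2^{m/2} (r(t - a) - 2 r(t - b) + r(t - c))` of ramps `r x = max x 0` with breakpoints
`a, b, c = k/2^m, (k+½)/2^m, (k+1)/2^m`. After the substitution `v = s - u`, the Riemann–Liouville
integral of a ramp is an elementary Beta-type integral,
`∫₀ˢ (s-u)^{-α} r(u - c) du = r(s - c)^{2-α} / ((1-α)(2-α))`, whose derivative in `s` is
`r(s - c)^{1-α} / (1-α)`. Then `Γ(2-α) = (1-α) Γ(1-α)` and `r(t - y/2^m) = 2^{-m} r(2^m t - y)`
give the formula.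
-/

lemma integral_indicator_Ioc_one {a b : ℝ} (ha : 0 ≤ a) (hab : a ≤ b) (t : ℝ) :
    ∫ s in (0 : ℝ)..t, (Ioc a b).indicator 1 s = max (t - a) 0 - max (t - b) 0 := by
  rcases le_total 0 t with ht | ht
  · rw [intervalIntegral.integral_of_le ht, integral_indicator_one measurableSet_Ioc,
      measureReal_restrict_apply measurableSet_Ioc, Ioc_inter_Ioc, Real.volume_real_Ioc]
    grind
  · rw [intervalIntegral.integral_of_ge ht, integral_indicator_one measurableSet_Ioc,
      measureReal_restrict_apply measurableSet_Ioc, Ioc_inter_Ioc, Real.volume_real_Ioc]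
    grind

lemma hasDerivAt_max_zero_rpow {p : ℝ} (hp : 1 < p) (x : ℝ) :
    HasDerivAt (fun y : ℝ => max y 0 ^ p) (p * max x 0 ^ (p - 1)) x := by
  -- At the kink `0`, the derivative is recovered from the continuity of `p * max y 0 ^ (p - 1)`.
  refine hasDerivAt_of_hasDerivAt_of_ne' (f := fun y : ℝ => max y 0 ^ p)
    (g := fun y => p * max y 0 ^ (p - 1)) (x := 0) (fun y hy => ?_) ?_ ?_ x
  · rcases hy.lt_or_gt with hy | hy
    · have hzero : (fun y : ℝ => max y 0 ^ p) =ᶠ[nhds y] fun _ => 0 := by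
        filter_upwards [Iio_mem_nhds hy] with z hz
        rw [max_eq_right hz.le, Real.zero_rpow (by linarith)]
      simp only [max_eq_right hy.le, Real.zero_rpow (by linarith : p - 1 ≠ 0), mul_zero]
      exact (hasDerivAt_const y 0).congr_of_eventuallyEq hzero
    · have hpow : (fun y : ℝ => max y 0 ^ p) =ᶠ[nhds y] fun z => z ^ p := by
        filter_upwards [Ioi_mem_nhds hy] with z hz
        rw [max_eq_left hz.le]
      simp only [max_eq_left hy.le]
      exact (Real.hasDerivAt_rpow_const (Or.inl hy.ne')).congr_of_eventuallyEq hpow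
  · exact ((continuous_id.max continuous_const).rpow_const fun _ => Or.inr (by linarith)).continuousAt
  · exact (((continuous_id.max continuous_const).rpow_const
      fun _ => Or.inr (by linarith)).const_mul p).continuousAt

lemma integral_rpow_neg_mul_sub {α : ℝ} (hα : α < 1) {d : ℝ} (hd : 0 ≤ d) :
    ∫ v in (0 : ℝ)..d, v ^ (-α) * (d - v) = d ^ (2 - α) / ((1 - α) * (2 - α)) := by
  have hsplit : ∀ᵐ v, v ∈ uIoc (0 : ℝ) d → v ^ (-α) * (d - v) = d * v ^ (-α) - v ^ (1 - α) := by
    filter_upwards with v hv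
    rw [uIoc_of_le hd] at hv
    rw [sub_eq_neg_add 1, Real.rpow_add_one hv.1.ne']
    ring
  have hint : ∀ r : ℝ, -1 < r → IntervalIntegrable (fun v : ℝ => v ^ r) volume 0 d :=
    fun r hr => intervalIntegral.intervalIntegrable_rpow' hr
  have hpow : d * d ^ (1 - α) = d ^ (2 - α) := by
    rw [← Real.rpow_one_add' hd (by linarith)]; ring_nf
  have h1 : 1 - α ≠ 0 := by linarith
  have h2 : 2 - α ≠ 0 := by linarith
  rw [intervalIntegral.integral_congr_ae hsplit,
    intervalIntegral.integral_sub ((hint _ (by linarith)).const_mul d) (hint _ (by linarith)),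
    intervalIntegral.integral_const_mul, integral_rpow (Or.inl (by linarith)),
    integral_rpow (Or.inl (by linarith)), Real.zero_rpow (by linarith),
    Real.zero_rpow (by linarith), neg_add_eq_sub, show 1 - α + 1 = 2 - α by ring]
  field_simp
  linear_combination (2 - α) * hpow

lemma integral_rpow_neg_mul_max_sub {α : ℝ} (hα : α < 1) {d s : ℝ} (hds : d ≤ s) :
    ∫ v in (0 : ℝ)..s, v ^ (-α) * max (d - v) 0 = max d 0 ^ (2 - α) / ((1 - α) * (2 - α)) := by
  have hzero : ∀ a b : ℝ, d ≤ min a b →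
      ∫ v in a..b, v ^ (-α) * max (d - v) 0 = 0 := by
    intro a b hab
    refine intervalIntegral.integral_zero_ae (ae_of_all _ fun v hv => ?_)
    rw [max_eq_right (by linarith [hv.1]), mul_zero]
  rcases le_or_gt d 0 with hd | hd
  · rw [hzero 0 s (le_min hd hds), max_eq_right hd, Real.zero_rpow (by linarith), zero_div]
  have hint : ∀ a b : ℝ, IntervalIntegrable (fun v : ℝ => v ^ (-α) * max (d - v) 0) volume a b :=
    fun a b => (intervalIntegral.intervalIntegrable_rpow' (by linarith)).mul_continuousOn
      (by fun_prop)
  rw [← intervalIntegral.integral_add_adjacent_intervals (hint 0 d) (hint d s),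
    hzero d s (le_min le_rfl hds), add_zero, max_eq_left hd.le,
    ← integral_rpow_neg_mul_sub hα hd.le]
  refine intervalIntegral.integral_congr fun v hv => ?_
  rw [uIcc_of_le hd.le] at hv
  simp only [max_eq_left (sub_nonneg.2 hv.2)]

lemma integral_sub_rpow_neg_mul_max_sub {α : ℝ} (hα : α < 1) {c : ℝ} (hc : 0 ≤ c) (s : ℝ) :
    ∫ u in (0 : ℝ)..s, (s - u) ^ (-α) * max (u - c) 0
      = max (s - c) 0 ^ (2 - α) / ((1 - α) * (2 - α)) := by
  have := intervalIntegral.integral_comp_sub_left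
    (fun v : ℝ => v ^ (-α) * max (s - c - v) 0) (a := 0) (b := s) s
  simp only [sub_self, sub_zero] at this
  rw [← integral_rpow_neg_mul_max_sub hα (by linarith : s - c ≤ s), ← this]
  simp_rw [sub_sub_sub_cancel_left]

lemma Haar_eq_mul_indicator_sub (m k : ℕ) :
    Haar m k = fun s => (2 : ℝ) ^ ((m : ℝ) / 2) *
      ((Ioc ((k : ℝ) / 2 ^ m) (((k : ℝ) + 0.5) / 2 ^ m)).indicator 1 s
        - (Ioc (((k : ℝ) + 0.5) / 2 ^ m) (((k : ℝ) + 1) / 2 ^ m)).indicator 1 s) := by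
  funext s
  have hdisj : s ∈ Ioc (((k : ℝ) + 0.5) / 2 ^ m) (((k : ℝ) + 1) / 2 ^ m) →
      s ∉ Ioc ((k : ℝ) / 2 ^ m) (((k : ℝ) + 0.5) / 2 ^ m) :=
    fun h₂ h₁ => (h₁.2.trans_lt h₂.1).false
  unfold Haar
  split_ifs with h₁ h₂
  · simp [h₁, indicator_of_notMem (mt hdisj (not_not.2 h₁))]
  · simp [h₂, hdisj h₂]
  · simp [*]

lemma FS_eq_max_sub (m k : ℕ) (t : ℝ) :
    FS m k t = 2 ^ ((m : ℝ) / 2) * (max (t - (k : ℝ) / 2 ^ m) 0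
      - 2 * max (t - ((k : ℝ) + 0.5) / 2 ^ m) 0 + max (t - ((k : ℝ) + 1) / 2 ^ m) 0) := by
  have hab : (k : ℝ) / 2 ^ m ≤ ((k : ℝ) + 0.5) / 2 ^ m := by gcongr; norm_num
  have hbc : ((k : ℝ) + 0.5) / 2 ^ m ≤ ((k : ℝ) + 1) / 2 ^ m := by gcongr; norm_num
  have hint : ∀ a b : ℝ, IntervalIntegrable ((Ioc a b).indicator (1 : ℝ → ℝ)) volume 0 t :=
    fun a b => ⟨(intervalIntegrable_const (c := (1 : ℝ))).1.indicator measurableSet_Ioc,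
      (intervalIntegrable_const (c := (1 : ℝ))).2.indicator measurableSet_Ioc⟩
  rw [FS, Haar_eq_mul_indicator_sub, intervalIntegral.integral_const_mul,
    intervalIntegral.integral_sub (hint _ _) (hint _ _),
    integral_indicator_Ioc_one (by positivity) hab, integral_indicator_Ioc_one (by positivity) hbc]
  ring

lemma intervalIntegrable_sub_rpow_neg_mul_max_sub {α : ℝ} (hα : α < 1) (s c a b : ℝ) :
    IntervalIntegrable (fun u => (s - u) ^ (-α) * max (u - c) 0) volume a b := by
  have hker : IntervalIntegrable (fun u : ℝ => (s - u) ^ (-α)) volume a b := by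
    simpa using ((intervalIntegral.intervalIntegrable_rpow' (a := s - b) (b := s - a)
      (by linarith : -1 < -α)).comp_sub_left s).symm
  exact hker.mul_continuousOn (by fun_prop)

lemma integral_sub_rpow_neg_mul_FS {α : ℝ} (hα : α < 1) (m k : ℕ) (s : ℝ) :
    ∫ u in (0 : ℝ)..s, (s - u) ^ (-α) * FS m k u
      = 2 ^ ((m : ℝ) / 2) / ((1 - α) * (2 - α)) * (max (s - (k : ℝ) / 2 ^ m) 0 ^ (2 - α)
        - 2 * max (s - ((k : ℝ) + 0.5) / 2 ^ m) 0 ^ (2 - α)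
        + max (s - ((k : ℝ) + 1) / 2 ^ m) 0 ^ (2 - α)) := by
  set C : ℝ := 2 ^ ((m : ℝ) / 2)
  set K : ℝ → ℝ → ℝ := fun c u => (s - u) ^ (-α) * max (u - c) 0
  have hKint : ∀ c, IntervalIntegrable (K c) volume 0 s :=
    fun c => intervalIntegrable_sub_rpow_neg_mul_max_sub hα s c 0 s
  have hKval : ∀ c : ℝ, 0 ≤ c → ∫ u in (0 : ℝ)..s, K c u
      = max (s - c) 0 ^ (2 - α) / ((1 - α) * (2 - α)) :=
    fun c hc => integral_sub_rpow_neg_mul_max_sub hα hc s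
  have hFS : ∀ u, (s - u) ^ (-α) * FS m k u = C * K ((k : ℝ) / 2 ^ m) u
      - 2 * C * K (((k : ℝ) + 0.5) / 2 ^ m) u + C * K (((k : ℝ) + 1) / 2 ^ m) u := by
    intro u
    rw [FS_eq_max_sub]
    ring
  simp_rw [hFS]
  rw [intervalIntegral.integral_add (((hKint _).const_mul _).sub ((hKint _).const_mul _))
      ((hKint _).const_mul _),
    intervalIntegral.integral_sub ((hKint _).const_mul _) ((hKint _).const_mul _),
    intervalIntegral.integral_const_mul, intervalIntegral.integral_const_mul,
    intervalIntegral.integral_const_mul, hKval _ (by positivity), hKval _ (by positivity),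
    hKval _ (by positivity)]
  ring

lemma Dleft_FS {α : ℝ} (hα : α < 1) (m k : ℕ) (t : ℝ) :
    Dleft α (FS m k) t = 2 ^ ((m : ℝ) / 2) / Real.Gamma (2 - α) *
      (max (t - (k : ℝ) / 2 ^ m) 0 ^ (1 - α) - 2 * max (t - ((k : ℝ) + 0.5) / 2 ^ m) 0 ^ (1 - α)
        + max (t - ((k : ℝ) + 1) / 2 ^ m) 0 ^ (1 - α)) := by
  have hp : 1 < 2 - α := by linarith
  have hramp : ∀ c : ℝ, HasDerivAt (fun s => max (s - c) 0 ^ (2 - α))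
      ((2 - α) * max (t - c) 0 ^ (1 - α)) t := fun c => by
    simpa [show 2 - α - 1 = 1 - α by ring] using
      (hasDerivAt_max_zero_rpow hp (t - c)).comp_sub_const t c
  set a : ℝ := (k : ℝ) / 2 ^ m
  set b : ℝ := ((k : ℝ) + 0.5) / 2 ^ m
  set c : ℝ := ((k : ℝ) + 1) / 2 ^ m
  have hderiv : HasDerivAt (fun s => 2 ^ ((m : ℝ) / 2) / ((1 - α) * (2 - α)) *
      (max (s - a) 0 ^ (2 - α) - 2 * max (s - b) 0 ^ (2 - α) + max (s - c) 0 ^ (2 - α))) _ t :=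
    (((hramp a).sub ((hramp b).const_mul 2)).add (hramp c)).const_mul _
  have hΓ : Real.Gamma (2 - α) = (1 - α) * Real.Gamma (1 - α) := by
    rw [show 2 - α = (1 - α) + 1 by ring, Real.Gamma_add_one (by linarith)]
  have h1 : 1 - α ≠ 0 := by linarith
  have h2 : 2 - α ≠ 0 := by linarith
  have hΓ1 : Real.Gamma (1 - α) ≠ 0 := (Real.Gamma_pos_of_pos (by linarith)).ne'
  rw [Dleft, funext (integral_sub_rpow_neg_mul_FS hα m k), hderiv.deriv, hΓ]
  field_simp

lemma max_sub_div_rpow {r : ℝ} (hr : 0 < r) (x y p : ℝ) :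
    max (x - y / r) 0 ^ p = max (r * x - y) 0 ^ p / r ^ p := by
  rw [← Real.div_rpow (le_max_right _ _) hr.le, ← max_div_div_right hr.le, zero_div]
  congr 2
  field_simp

theorem fractional_derivative_FS_left_general (α : ℝ) (hα : α ∈ Set.Ioo (0 : ℝ) 1)
    (m k : ℕ) (t : ℝ) :
    Dleft α (FS m k) t =
      (2 : ℝ) ^ ((m : ℝ) * (α - 1 / 2)) / Real.Gamma (2 - α) *
        ((max (2 ^ m * t - (k : ℝ)) 0) ^ (1 - α)
          - 2 * (max (2 ^ m * t - (k : ℝ) - 0.5) 0) ^ (1 - α)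
          + (max (2 ^ m * t - (k : ℝ) - 1) 0) ^ (1 - α)) := by
  have h2m : (0 : ℝ) < 2 ^ m := by positivity
  have hscale : (2 : ℝ) ^ ((m : ℝ) / 2) / ((2 : ℝ) ^ m) ^ (1 - α)
      = (2 : ℝ) ^ ((m : ℝ) * (α - 1 / 2)) := by
    rw [← Real.rpow_natCast, ← Real.rpow_mul zero_le_two, ← Real.rpow_sub two_pos]
    ring_nf
  rw [Dleft_FS hα.2, max_sub_div_rpow h2m, max_sub_div_rpow h2m, max_sub_div_rpow h2m,
    ← hscale, sub_sub, sub_sub]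
  ring

theorem fractional_derivative_FS_left (α : ℝ) (hα : α ∈ Set.Ioo (0 : ℝ) 1)
    (m k : ℕ) (hk : k < 2 ^ m) (t : ℝ) (ht : t ∈ Set.Ioo (0 : ℝ) 1) :
    Dleft α (FS m k) t =
      (2 : ℝ) ^ ((m : ℝ) * (α - 1 / 2)) / Real.Gamma (2 - α) *
        ((max (2 ^ m * t - (k : ℝ)) 0) ^ (1 - α)
          - 2 * (max (2 ^ m * t - (k : ℝ) - 0.5) 0) ^ (1 - α)
          + (max (2 ^ m * t - (k : ℝ) - 1) 0) ^ (1 - α)) :=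
  fractional_derivative_FS_left_general α hα m k t
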